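/- arXiv:1105.5313 — 5 statements merged into one kernel-verified Lean document; each statement's English description precedes it below -/
import Mathlib

section
/- The submonoid of the power set monoid P(S_n) generated by the sets {id, s_i} for i = 1,...,n-1 (where s_i are the simple transpositions) is isomorphic to the 0-Hecke monoid H_n; explicitly, the map sending the generator e_i of H_n to {id, s_i} extends to a monoid isomorphism. -/
open Pointwise

/-- The simple transposition `(i, i+1)` in the symmetric group on `Fin n`. -/
def simpleT {n : ℕ} (i : Fin (n - 1)) : Equiv.Perm (Fin n) :=
  Equiv.swap ⟨i.1, by have := i.2; omega⟩ ⟨i.1 + 1, by have := i.2; omega⟩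

/-- Defining relations of the 0-Hecke monoid. -/
def heckeRels (n : ℕ) : Set (FreeMonoid (Fin (n - 1)) × FreeMonoid (Fin (n - 1))) :=
  {p | (∃ i, p = (FreeMonoid.of i * FreeMonoid.of i, FreeMonoid.of i)) ∨
       (∃ i j, i.1 + 2 ≤ j.1 ∧
          p = (FreeMonoid.of i * FreeMonoid.of j, FreeMonoid.of j * FreeMonoid.of i)) ∨
       (∃ i j, j.1 = i.1 + 1 ∧
          p = (FreeMonoid.of i * FreeMonoid.of j * FreeMonoid.of i,
               FreeMonoid.of j * FreeMonoid.of i * FreeMonoid.of j))}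

/-- The congruence on the free monoid generated by the 0-Hecke relations. -/
def heckeCon (n : ℕ) : Con (FreeMonoid (Fin (n - 1))) :=
  conGen (fun a b => (a, b) ∈ heckeRels n)

/-- The 0-Hecke monoid `H_n`. -/
abbrev Hecke (n : ℕ) := (heckeCon n).Quotient

/-- The generator `e_i` of the 0-Hecke monoid. -/
def heckeGen (n : ℕ) (i : Fin (n - 1)) : Hecke n := (heckeCon n).mk' (FreeMonoid.of i)

/-- Binary relations on `Fin n` (equivalently, `n × n` Boolean matrices),
with `ξ i j` meaning the `(i,j)` entry is `1`. -/
abbrev BRel (n : ℕ) := Fin n → Fin n → Prop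

/-- The monoid of binary relations / Boolean matrices, under relational
composition (= Boolean matrix multiplication). -/
instance BRel.instMonoid (n : ℕ) : Monoid (BRel n) where
  mul r s := fun i j => ∃ k, r i k ∧ s k j
  one := fun i j => i = j
  mul_assoc r s t := by
    funext i j
    show (∃ k, (∃ m, r i m ∧ s m k) ∧ t k j) = (∃ m, r i m ∧ ∃ k, s m k ∧ t k j)
    apply propext; tauto
  one_mul r := by
    funext i j
    show (∃ k, i = k ∧ r k j) = r i j
    apply propext
    constructor
    · rintro ⟨k, rfl, h⟩; exact h
    · intro h; exact ⟨i, rfl, h⟩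
  mul_one r := by
    funext i j
    show (∃ k, r i k ∧ k = j) = r i j
    apply propext
    constructor
    · rintro ⟨k, h, rfl⟩; exact h
    · intro h; exact ⟨j, h, rfl⟩

theorem BRel.mul_def {n : ℕ} (r s : BRel n) (i j : Fin n) :
    (r * s) i j ↔ ∃ k, r i k ∧ s k j := Iff.rfl

theorem BRel.one_def {n : ℕ} (i j : Fin n) : (1 : BRel n) i j ↔ i = j := Iff.rfl

/-- The generator `ε_i = Φ(id) + Φ(s_i)` of the double Catalan monoid:
the identity matrix plus extra `1` entries at `(i, i+1)` and `(i+1, i)`. -/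
def eps {n : ℕ} (i : Fin (n - 1)) : BRel n := fun a b => a = b ∨ a = simpleT i b

/-- The double Catalan monoid `DC_n`, the submonoid of Boolean matrices
generated by the `ε_i`. -/
def DC (n : ℕ) : Submonoid (BRel n) := Submonoid.closure (Set.range (eps (n := n)))

open Classical in
/-- `max(ξ)(j)` : the largest row index `i` with `ξ i j` (for a reflexive
relation; the diagonal element `j` is thrown in to guarantee nonemptiness). -/
noncomputable def maxF {n : ℕ} (ξ : BRel n) (j : Fin n) : Fin n :=
  (insert j (Finset.univ.filter fun i => ξ i j)).max' (Finset.insert_nonempty _ _)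

open Classical in
/-- `min(ξ)(j)` : the smallest row index `i` with `ξ i j`. -/
noncomputable def minF {n : ℕ} (ξ : BRel n) (j : Fin n) : Fin n :=
  (insert j (Finset.univ.filter fun i => ξ i j)).min' (Finset.insert_nonempty _ _)

/-- A set of `Fin n` is an interval of consecutive integers. -/
def IsIntervalSet {n : ℕ} (S : Set (Fin n)) : Prop :=
  ∀ ⦃a b c : Fin n⦄, a ≤ b → b ≤ c → a ∈ S → c ∈ S → b ∈ S

/-- A binary relation is convex if it is reflexive and all its rows and
columns are intervals. -/
def IsConvexRel {n : ℕ} (ξ : BRel n) : Prop :=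
  (∀ i, ξ i i) ∧ (∀ j, IsIntervalSet {i | ξ i j}) ∧ (∀ j, IsIntervalSet {i | ξ j i})

/-- The left-to-right maximum function `α_w`. -/
def lrMax {n : ℕ} (w : Equiv.Perm (Fin n)) (j : Fin n) : Fin n :=
  (Finset.Iic j).sup' ⟨j, Finset.mem_Iic.2 le_rfl⟩ (fun k => w k)

/-- The right-to-left minimum function `β_w`. -/
def rlMin {n : ℕ} (w : Equiv.Perm (Fin n)) (j : Fin n) : Fin n :=
  (Finset.Ici j).inf' ⟨j, Finset.mem_Ici.2 le_rfl⟩ (fun k => w k)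

/-- The Boolean matrix `Ψ(z_w)`, the image of `w` in the double Catalan
monoid: the `(i,j)` entry is `1` iff `β_w(j) ≤ i ≤ α_w(j)`. -/
def psiMat {n : ℕ} (w : Equiv.Perm (Fin n)) : BRel n :=
  fun i j => rlMin w j ≤ i ∧ i ≤ lrMax w j

/-- `l` is a reduced word for the permutation `w`. -/
def IsRedWord {n : ℕ} (w : Equiv.Perm (Fin n)) (l : List (Fin (n - 1))) : Prop :=
  (l.map simpleT).prod = w ∧
    ∀ l' : List (Fin (n - 1)), (l'.map simpleT).prod = w → l.length ≤ l'.length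

/-- The Bruhat order on the symmetric group, via the subword property. -/
def bruhatLE {n : ℕ} (u w : Equiv.Perm (Fin n)) : Prop :=
  ∃ lw, IsRedWord w lw ∧ ∃ lu, lu.Sublist lw ∧ IsRedWord u lu

/-- `w` is 321-avoiding. -/
def Avoids321 {n : ℕ} (w : Equiv.Perm (Fin n)) : Prop :=
  ¬ ∃ i j k : Fin n, i < j ∧ j < k ∧ w k < w j ∧ w j < w i

/-- `w` is 312-avoiding. -/
def Avoids312 {n : ℕ} (w : Equiv.Perm (Fin n)) : Prop :=
  ¬ ∃ i j k : Fin n, i < j ∧ j < k ∧ w j < w k ∧ w k < w i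

/-- `w` is 4321-avoiding. -/
def Avoids4321 {n : ℕ} (w : Equiv.Perm (Fin n)) : Prop :=
  ¬ ∃ i j k l : Fin n, i < j ∧ j < k ∧ k < l ∧ w l < w k ∧ w k < w j ∧ w j < w i

/-- The monoid `C_n^+` of order-preserving non-decreasing transformations. -/
def Cplus (n : ℕ) : Submonoid (Function.End (Fin n)) where
  carrier := {f | Monotone f ∧ ∀ i, i ≤ f i}
  one_mem' := ⟨monotone_id, fun _ => le_rfl⟩
  mul_mem' := by
    rintro f g ⟨hf1, hf2⟩ ⟨hg1, hg2⟩
    exact ⟨hf1.comp hg1, fun i => (hg2 i).trans (hf2 (g i))⟩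

/-- The monoid `C_n^-` of order-preserving non-increasing transformations. -/
def Cminus (n : ℕ) : Submonoid (Function.End (Fin n)) where
  carrier := {f | Monotone f ∧ ∀ i, f i ≤ i}
  one_mem' := ⟨monotone_id, fun _ => le_rfl⟩
  mul_mem' := by
    rintro f g ⟨hf1, hf2⟩ ⟨hg1, hg2⟩
    exact ⟨hf1.comp hg1, fun i => (hf2 (g i)).trans (hg2 i)⟩

/-!
The assignment `e_i ↦ {1, s_i}` respects the 0-Hecke relations, so it defines a morphism from
`H_n` onto the submonoid generated by the sets `{1, s_i}`; it sends a word `e_{i₁} ⋯ e_{iₖ}` to the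
set of subword products of `s_{i₁} ⋯ s_{iₖ}`.

For injectivity, every element of `H_n` is represented by a reduced word of some permutation `w`
(use `e_i e_i = e_i` whenever a letter does not lengthen the product), and all reduced words of
`w` represent the same element: this is Matsumoto's theorem, proved by induction on the number of
inversions, since two left descents `i ≠ j` of `w` produce reduced words of `w` starting with
`i j` and `j i` (if `|i - j| ≥ 2`) or `i j i` and `j i j` (if `|i - j| = 1`). Finally `w` is
recovered from the set of subword products of any of its reduced words as its unique element with
the most inversions.
-/

section PairSets

variable {M : Type*} [Monoid M]

theorem pair_mul_self {a : M} (ha : a * a = 1) : ({1, a} : Set M) * {1, a} = {1, a} := by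
  ext x
  simp only [Set.mem_mul, Set.mem_insert_iff, Set.mem_singleton_iff, or_and_right, exists_or,
    ↓existsAndEq, true_and, mul_one, one_mul, ha]
  tauto

theorem pair_mul_pair_comm {a b : M} (h : a * b = b * a) :
    ({1, a} : Set M) * {1, b} = {1, b} * {1, a} := by
  ext x
  simp only [Set.mem_mul, Set.mem_insert_iff, Set.mem_singleton_iff, or_and_right, exists_or,
    ↓existsAndEq, true_and, mul_one, one_mul, h]
  tauto

theorem pair_mul_pair_mul_pair_comm {a b : M} (ha : a * a = 1) (hb : b * b = 1)
    (h : a * b * a = b * a * b) :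
    ({1, a} : Set M) * {1, b} * {1, a} = {1, b} * {1, a} * {1, b} := by
  have h' : a * (b * a) = b * (a * b) := by simpa only [mul_assoc] using h
  ext x
  simp only [Set.mem_mul, Set.mem_insert_iff, Set.mem_singleton_iff, or_and_right, exists_or,
    ↓existsAndEq, true_and, mul_one, one_mul, mul_assoc, ha, hb, h']
  tauto

theorem List.prod_map_pair_one (l : List M) :
    (l.map fun a => ({1, a} : Set M)).prod = {x | ∃ t : List M, t.Sublist l ∧ t.prod = x} := by
  induction l with
  | nil => ext; simp [eq_comm]
  | cons a l ih =>
    ext x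
    simp only [List.map_cons, List.prod_cons, ih, Set.mem_mul, Set.mem_insert_iff,
      Set.mem_singleton_iff, Set.mem_ofPred_eq, List.sublist_cons_iff]
    constructor
    · rintro ⟨y, (rfl | rfl), _, ⟨t, ht, rfl⟩, rfl⟩
      exacts [⟨t, .inl ht, (one_mul _).symm⟩, ⟨y :: t, .inr ⟨t, rfl, ht⟩, rfl⟩]
    · rintro ⟨_, ht | ⟨t, rfl, ht⟩, rfl⟩
      exacts [⟨1, .inl rfl, _, ⟨_, ht, rfl⟩, one_mul _⟩, ⟨a, .inr rfl, _, ⟨t, ht, rfl⟩, rfl⟩]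

end PairSets

namespace ZeroHecke

variable {n : ℕ}

def lo (i : Fin (n - 1)) : Fin n := ⟨i, by omega⟩

def hi (i : Fin (n - 1)) : Fin n := ⟨i + 1, by omega⟩

theorem simpleT_eq_swap (i : Fin (n - 1)) : simpleT i = Equiv.swap (lo i) (hi i) := rfl

theorem lo_lt_hi (i : Fin (n - 1)) : lo i < hi i := Nat.lt_succ_self _

@[simp] theorem simpleT_apply_lo (i : Fin (n - 1)) : simpleT i (lo i) = hi i :=
  Equiv.swap_apply_left _ _

@[simp] theorem simpleT_apply_hi (i : Fin (n - 1)) : simpleT i (hi i) = lo i :=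
  Equiv.swap_apply_right _ _

theorem simpleT_apply_of_ne {i : Fin (n - 1)} {x : Fin n} (h₁ : x.1 ≠ i.1) (h₂ : x.1 ≠ i.1 + 1) :
    simpleT i x = x :=
  Equiv.swap_apply_of_ne_of_ne (Fin.ne_of_val_ne h₁) (Fin.ne_of_val_ne h₂)

theorem simpleT_apply_lo_of_ne {i j : Fin (n - 1)} (h₁ : j.1 ≠ i.1) (h₂ : j.1 ≠ i.1 + 1) :
    simpleT i (lo j) = lo j :=
  simpleT_apply_of_ne h₁ h₂

theorem simpleT_apply_hi_of_ne {i j : Fin (n - 1)} (h₁ : j.1 + 1 ≠ i.1) (h₂ : j.1 ≠ i.1) :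
    simpleT i (hi j) = hi j :=
  simpleT_apply_of_ne h₁ fun h => h₂ (Nat.succ.inj h)

@[simp] theorem simpleT_mul_self (i : Fin (n - 1)) : simpleT i * simpleT i = 1 :=
  Equiv.swap_mul_self _ _

@[simp] theorem simpleT_mul_simpleT_mul (i : Fin (n - 1)) (w : Equiv.Perm (Fin n)) :
    simpleT i * (simpleT i * w) = w := by
  rw [← mul_assoc, simpleT_mul_self, one_mul]

@[simp] theorem simpleT_inv (i : Fin (n - 1)) : (simpleT i)⁻¹ = simpleT i := Equiv.swap_inv _ _

theorem lo_eq_hi_of_adj {i j : Fin (n - 1)} (h : j.1 = i.1 + 1) : lo j = hi i := Fin.ext h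

theorem simpleT_mul_comm {i j : Fin (n - 1)} (h : i.1 + 2 ≤ j.1) :
    simpleT i * simpleT j = simpleT j * simpleT i := by
  rw [simpleT_eq_swap j, Equiv.mul_swap_eq_swap_mul,
    simpleT_apply_lo_of_ne (by omega) (by omega),
    simpleT_apply_hi_of_ne (by omega) (by omega)]

theorem simpleT_braid {i j : Fin (n - 1)} (h : j.1 = i.1 + 1) :
    simpleT i * simpleT j * simpleT i = simpleT j * simpleT i * simpleT j := by
  -- both sides are the transposition of `lo i` and `hi j`
  have hij : simpleT i * simpleT j = Equiv.swap (lo i) (hi j) * simpleT i := by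
    rw [simpleT_eq_swap j, Equiv.mul_swap_eq_swap_mul, lo_eq_hi_of_adj h, simpleT_apply_hi,
      simpleT_apply_hi_of_ne (by omega) (by omega)]
  have hji : simpleT j * simpleT i = Equiv.swap (lo i) (hi j) * simpleT j := by
    rw [simpleT_eq_swap i, Equiv.mul_swap_eq_swap_mul, ← lo_eq_hi_of_adj h, simpleT_apply_lo,
      simpleT_apply_lo_of_ne (by omega) (by omega)]
  rw [hij, hji, mul_assoc, mul_assoc, simpleT_mul_self, simpleT_mul_self]

theorem simpleT_lt_simpleT_iff (i : Fin (n - 1)) {x y : Fin n} (h₁ : ¬(x = lo i ∧ y = hi i))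
    (h₂ : ¬(x = hi i ∧ y = lo i)) : simpleT i x < simpleT i y ↔ x < y := by
  simp only [lo, hi, Fin.ext_iff] at h₁ h₂
  simp only [simpleT, Equiv.swap_apply_def, Fin.lt_def]
  split_ifs <;> simp_all [Fin.ext_iff] <;> omega

def inversions (w : Equiv.Perm (Fin n)) : Finset (Fin n × Fin n) :=
  {p | p.1 < p.2 ∧ w p.2 < w p.1}

def invCount (w : Equiv.Perm (Fin n)) : ℕ := (inversions w).card

def IsLeftDescent (w : Equiv.Perm (Fin n)) (i : Fin (n - 1)) : Prop := w⁻¹ (hi i) < w⁻¹ (lo i)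

theorem mem_inversions {w : Equiv.Perm (Fin n)} {p : Fin n × Fin n} :
    p ∈ inversions w ↔ p.1 < p.2 ∧ w p.2 < w p.1 := by
  simp [inversions]

theorem not_isLeftDescent_iff {w : Equiv.Perm (Fin n)} {i : Fin (n - 1)} :
    ¬IsLeftDescent w i ↔ w⁻¹ (lo i) < w⁻¹ (hi i) := by
  rw [IsLeftDescent, not_lt, le_iff_lt_or_eq, or_iff_left]
  exact fun h => (lo_lt_hi i).ne (w⁻¹.injective h)

theorem inv_simpleT_mul_apply (i : Fin (n - 1)) (w : Equiv.Perm (Fin n)) (x : Fin n) :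
    (simpleT i * w)⁻¹ x = w⁻¹ (simpleT i x) := by
  rw [mul_inv_rev, simpleT_inv, Equiv.Perm.mul_apply]

theorem isLeftDescent_simpleT_mul_iff {w : Equiv.Perm (Fin n)} {i : Fin (n - 1)} :
    IsLeftDescent (simpleT i * w) i ↔ ¬IsLeftDescent w i := by
  rw [not_isLeftDescent_iff, IsLeftDescent, inv_simpleT_mul_apply, inv_simpleT_mul_apply,
    simpleT_apply_lo, simpleT_apply_hi]

theorem inversions_simpleT_mul {w : Equiv.Perm (Fin n)} {i : Fin (n - 1)}
    (h : ¬IsLeftDescent w i) :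
    inversions (simpleT i * w) = insert (w⁻¹ (lo i), w⁻¹ (hi i)) (inversions w) := by
  rw [not_isLeftDescent_iff] at h
  ext ⟨p, q⟩
  simp only [Finset.mem_insert, mem_inversions, Prod.mk.injEq, Equiv.Perm.mul_apply]
  by_cases hpq : p = w⁻¹ (lo i) ∧ q = w⁻¹ (hi i)
  · obtain ⟨rfl, rfl⟩ := hpq
    exact iff_of_true ⟨h, by simp [lo_lt_hi]⟩ (.inl ⟨rfl, rfl⟩)
  · rw [or_iff_right hpq]
    refine and_congr_right fun hlt => simpleT_lt_simpleT_iff i ?_ ?_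
    · rintro ⟨hq, hp⟩
      rw [← Equiv.Perm.eq_inv_iff_eq] at hp hq
      exact (hp ▸ hq ▸ hlt).not_gt h
    · rintro ⟨hq, hp⟩
      rw [← Equiv.Perm.eq_inv_iff_eq] at hp hq
      exact hpq ⟨hp, hq⟩

theorem invCount_simpleT_mul_of_not_isLeftDescent {w : Equiv.Perm (Fin n)} {i : Fin (n - 1)}
    (h : ¬IsLeftDescent w i) : invCount (simpleT i * w) = invCount w + 1 := by
  rw [invCount, inversions_simpleT_mul h, Finset.card_insert_of_notMem]
  · rfl
  · rw [not_isLeftDescent_iff] at h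
    simp only [mem_inversions, Equiv.Perm.coe_inv, Equiv.apply_symm_apply, not_and, not_lt]
    exact fun _ => (lo_lt_hi i).le

theorem invCount_simpleT_mul_of_isLeftDescent {w : Equiv.Perm (Fin n)} {i : Fin (n - 1)}
    (h : IsLeftDescent w i) : invCount (simpleT i * w) + 1 = invCount w := by
  have := invCount_simpleT_mul_of_not_isLeftDescent
    (isLeftDescent_simpleT_mul_iff.not.2 (not_not.2 h))
  rwa [simpleT_mul_simpleT_mul, eq_comm] at this

theorem invCount_one : invCount (1 : Equiv.Perm (Fin n)) = 0 := by
  rw [invCount, Finset.card_eq_zero, Finset.eq_empty_iff_forall_notMem]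
  exact fun _ h => lt_asymm (mem_inversions.1 h).1 (mem_inversions.1 h).2

theorem invCount_simpleT_mul_le (i : Fin (n - 1)) (w : Equiv.Perm (Fin n)) :
    invCount (simpleT i * w) ≤ invCount w + 1 := by
  by_cases h : IsLeftDescent w i
  · have := invCount_simpleT_mul_of_isLeftDescent h
    omega
  · exact (invCount_simpleT_mul_of_not_isLeftDescent h).le

theorem exists_isLeftDescent {w : Equiv.Perm (Fin n)} (hw : w ≠ 1) : ∃ i, IsLeftDescent w i := by
  by_contra! h
  simp only [not_isLeftDescent_iff] at h
  have hmono : StrictMono ⇑w⁻¹ := by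
    match n, w, h with
    | 0, _, _ => exact fun a => a.elim0
    | _ + 1, _, h => exact Fin.strictMono_iff_lt_succ.2 h
  have : ⇑w⁻¹ = id := by
    refine (hmono.range_inj strictMono_id).1 ?_
    rw [Set.range_id, Set.range_eq_univ]
    exact w⁻¹.surjective
  exact hw (inv_eq_one.1 (Equiv.ext (congrFun this)))

def wordProd (l : List (Fin (n - 1))) : Equiv.Perm (Fin n) := (l.map simpleT).prod

@[simp] theorem wordProd_cons (i : Fin (n - 1)) (l : List (Fin (n - 1))) :
    wordProd (i :: l) = simpleT i * wordProd l := List.prod_cons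

theorem invCount_wordProd_le (l : List (Fin (n - 1))) : invCount (wordProd l) ≤ l.length := by
  induction l with
  | nil => exact invCount_one.le
  | cons i l ih =>
    rw [wordProd_cons, List.length_cons]
    exact (invCount_simpleT_mul_le i _).trans (by omega)

theorem exists_wordProd_eq_length_eq_invCount (w : Equiv.Perm (Fin n)) :
    ∃ l, wordProd l = w ∧ l.length = invCount w := by
  induction hk : invCount w generalizing w with
  | zero =>
    refine ⟨[], ?_, rfl⟩
    by_contra hw
    obtain ⟨i, hi⟩ := exists_isLeftDescent (Ne.symm hw)
    have := invCount_simpleT_mul_of_isLeftDescent hi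
    omega
  | succ k ih =>
    have hw : w ≠ 1 := by rintro rfl; simp [invCount_one] at hk
    obtain ⟨i, hi⟩ := exists_isLeftDescent hw
    have := invCount_simpleT_mul_of_isLeftDescent hi
    obtain ⟨l, hl, hlen⟩ := ih (simpleT i * w) (by omega)
    exact ⟨i :: l, by simp [hl], by simp [hlen]⟩

theorem isRedWord_iff {w : Equiv.Perm (Fin n)} {l : List (Fin (n - 1))} :
    IsRedWord w l ↔ wordProd l = w ∧ l.length = invCount w := by
  change (wordProd l = w ∧ ∀ l', wordProd l' = w → l.length ≤ l'.length) ↔ _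
  constructor
  · rintro ⟨hl, hmin⟩
    obtain ⟨l', hl', hlen'⟩ := exists_wordProd_eq_length_eq_invCount w
    have := hmin l' hl'
    have := invCount_wordProd_le l
    rw [hl] at this
    exact ⟨hl, by omega⟩
  · rintro ⟨hl, hlen⟩
    refine ⟨hl, fun l' hl' => ?_⟩
    have := invCount_wordProd_le l'
    rw [hl'] at this
    omega

theorem isRedWord_cons_iff {w : Equiv.Perm (Fin n)} {i : Fin (n - 1)} {l : List (Fin (n - 1))} :
    IsRedWord w (i :: l) ↔ IsLeftDescent w i ∧ IsRedWord (simpleT i * w) l := by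
  simp only [isRedWord_iff, wordProd_cons, List.length_cons]
  constructor
  · rintro ⟨hl, hlen⟩
    have hl' : wordProd l = simpleT i * w := by rw [← hl, simpleT_mul_simpleT_mul]
    have h₁ := invCount_wordProd_le l
    have h₂ := invCount_simpleT_mul_le i (simpleT i * w)
    rw [hl'] at h₁
    rw [simpleT_mul_simpleT_mul] at h₂
    refine ⟨by_contra fun hd => ?_, hl', by omega⟩
    have := invCount_simpleT_mul_of_not_isLeftDescent hd
    omega
  · rintro ⟨hd, hl, hlen⟩
    have := invCount_simpleT_mul_of_isLeftDescent hd
    exact ⟨by rw [hl, simpleT_mul_simpleT_mul], by omega⟩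

theorem exists_isRedWord (w : Equiv.Perm (Fin n)) : ∃ l, IsRedWord w l :=
  (exists_wordProd_eq_length_eq_invCount w).imp fun _ => isRedWord_iff.2

theorem exists_isRedWord_of_far {w : Equiv.Perm (Fin n)} {i j : Fin (n - 1)}
    (hij : i.1 + 2 ≤ j.1) (hdi : IsLeftDescent w i) (hdj : IsLeftDescent w j) :
    ∃ r, IsRedWord (simpleT i * w) (j :: r) ∧ IsRedWord (simpleT j * w) (i :: r) := by
  obtain ⟨r, hr⟩ := exists_isRedWord (simpleT j * (simpleT i * w))
  have hr' : IsRedWord (simpleT i * (simpleT j * w)) r := by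
    rwa [← mul_assoc, simpleT_mul_comm hij, mul_assoc]
  have f₁ : simpleT i (lo j) = lo j := simpleT_apply_lo_of_ne (by omega) (by omega)
  have f₂ : simpleT i (hi j) = hi j := simpleT_apply_hi_of_ne (by omega) (by omega)
  have f₃ : simpleT j (lo i) = lo i := simpleT_apply_lo_of_ne (by omega) (by omega)
  have f₄ : simpleT j (hi i) = hi i := simpleT_apply_hi_of_ne (by omega) (by omega)
  simp only [isRedWord_cons_iff, IsLeftDescent, inv_simpleT_mul_apply, f₁, f₂, f₃, f₄]
  exact ⟨r, ⟨hdj, hr⟩, ⟨hdi, hr'⟩⟩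

theorem exists_isRedWord_of_adj {w : Equiv.Perm (Fin n)} {i j : Fin (n - 1)}
    (hij : j.1 = i.1 + 1) (hdi : IsLeftDescent w i) (hdj : IsLeftDescent w j) :
    ∃ r, IsRedWord (simpleT i * w) (j :: i :: r) ∧ IsRedWord (simpleT j * w) (i :: j :: r) := by
  obtain ⟨r, hr⟩ := exists_isRedWord (simpleT i * (simpleT j * (simpleT i * w)))
  have hr' : IsRedWord (simpleT j * (simpleT i * (simpleT j * w))) r := by
    simpa only [← mul_assoc, simpleT_braid hij] using hr
  have e : lo j = hi i := lo_eq_hi_of_adj hij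
  have f₁ : simpleT i (hi j) = hi j := simpleT_apply_hi_of_ne (by omega) (by omega)
  have f₂ : simpleT j (lo i) = lo i := simpleT_apply_lo_of_ne (by omega) (by omega)
  have f₃ : simpleT j (hi i) = hi j := by rw [← e, simpleT_apply_lo]
  have f₄ : simpleT j (hi j) = hi i := by rw [simpleT_apply_hi, e]
  rw [IsLeftDescent, e] at hdj
  simp only [isRedWord_cons_iff, IsLeftDescent, inv_simpleT_mul_apply, e, simpleT_apply_lo,
    simpleT_apply_hi, f₁, f₂, f₃, f₄]
  exact ⟨r, ⟨hdj.trans hdi, hdj, hr⟩, ⟨hdj.trans hdi, hdi, hr'⟩⟩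



theorem heckeGen_mul_self (i : Fin (n - 1)) : heckeGen n i * heckeGen n i = heckeGen n i :=
  (Con.eq _).2 (ConGen.Rel.of _ _ (.inl ⟨i, rfl⟩))

theorem heckeGen_mul_comm {i j : Fin (n - 1)} (h : i.1 + 2 ≤ j.1) :
    heckeGen n i * heckeGen n j = heckeGen n j * heckeGen n i :=
  (Con.eq _).2 (ConGen.Rel.of _ _ (.inr (.inl ⟨i, j, h, rfl⟩)))

theorem heckeGen_braid {i j : Fin (n - 1)} (h : j.1 = i.1 + 1) :
    heckeGen n i * heckeGen n j * heckeGen n i = heckeGen n j * heckeGen n i * heckeGen n j :=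
  (Con.eq _).2 (ConGen.Rel.of _ _ (.inr (.inr ⟨i, j, h, rfl⟩)))

@[elab_as_elim]
theorem Hecke.induction_on {p : Hecke n → Prop} (x : Hecke n) (one : p 1)
    (gen_mul : ∀ i x, p x → p (heckeGen n i * x)) : p x := by
  obtain ⟨u, rfl⟩ := Con.mk'_surjective x
  induction u using FreeMonoid.inductionOn' with
  | one => exact one
  | of_mul i u ih => exact gen_mul i _ ih

def heckeWord (l : List (Fin (n - 1))) : Hecke n := (l.map (heckeGen n)).prod

@[simp] theorem heckeWord_cons (i : Fin (n - 1)) (l : List (Fin (n - 1))) :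
    heckeWord (i :: l) = heckeGen n i * heckeWord l := List.prod_cons

section Lift

variable {M : Type*} [Monoid M] (f : Fin (n - 1) → M)

theorem heckeCon_le_ker_lift (h_idem : ∀ i, f i * f i = f i)
    (h_comm : ∀ i j : Fin (n - 1), i.1 + 2 ≤ j.1 → f i * f j = f j * f i)
    (h_braid : ∀ i j : Fin (n - 1), j.1 = i.1 + 1 → f i * f j * f i = f j * f i * f j) :
    heckeCon n ≤ Con.ker (FreeMonoid.lift f) := by
  refine Con.conGen_le.2 ?_
  rintro _ _ (⟨i, h⟩ | ⟨i, j, hij, h⟩ | ⟨i, j, hij, h⟩) <;> cases h <;>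
    simp only [Con.ker_rel, map_mul, FreeMonoid.lift_eval_of]
  exacts [h_idem i, h_comm i j hij, h_braid i j hij]

def heckeLift (h_idem : ∀ i, f i * f i = f i)
    (h_comm : ∀ i j : Fin (n - 1), i.1 + 2 ≤ j.1 → f i * f j = f j * f i)
    (h_braid : ∀ i j : Fin (n - 1), j.1 = i.1 + 1 → f i * f j * f i = f j * f i * f j) :
    Hecke n →* M :=
  (heckeCon n).lift (FreeMonoid.lift f) (heckeCon_le_ker_lift f h_idem h_comm h_braid)

variable {f} (h_idem : ∀ i, f i * f i = f i)
  (h_comm : ∀ i j : Fin (n - 1), i.1 + 2 ≤ j.1 → f i * f j = f j * f i)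
  (h_braid : ∀ i j : Fin (n - 1), j.1 = i.1 + 1 → f i * f j * f i = f j * f i * f j)

@[simp] theorem heckeLift_heckeGen (i : Fin (n - 1)) :
    heckeLift f h_idem h_comm h_braid (heckeGen n i) = f i :=
  Con.lift_mk' _ _

theorem mrange_heckeLift :
    MonoidHom.mrange (heckeLift f h_idem h_comm h_braid) = Submonoid.closure (Set.range f) := by
  rw [heckeLift, Con.lift_range, FreeMonoid.mrange_lift]

end Lift

theorem exists_isRedWord_heckeGen_mul_eq {w : Equiv.Perm (Fin n)} {i j : Fin (n - 1)}
    (hdi : IsLeftDescent w i) (hdj : IsLeftDescent w j) :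
    ∃ p q, IsRedWord (simpleT i * w) p ∧ IsRedWord (simpleT j * w) q ∧
      heckeGen n i * heckeWord p = heckeGen n j * heckeWord q := by
  wlog hij : i.1 ≤ j.1 generalizing i j
  · obtain ⟨p, q, hp, hq, h⟩ := this hdj hdi (by omega)
    exact ⟨q, p, hq, hp, h.symm⟩
  obtain hij | hij | hij : i = j ∨ j.1 = i.1 + 1 ∨ i.1 + 2 ≤ j.1 := by
    rw [Fin.ext_iff]; omega
  · subst hij
    obtain ⟨p, hp⟩ := exists_isRedWord (simpleT i * w)
    exact ⟨p, p, hp, hp, rfl⟩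
  · obtain ⟨r, hp, hq⟩ := exists_isRedWord_of_adj hij hdi hdj
    refine ⟨_, _, hp, hq, ?_⟩
    simp only [heckeWord_cons, ← mul_assoc, heckeGen_braid hij]
  · obtain ⟨r, hp, hq⟩ := exists_isRedWord_of_far hij hdi hdj
    refine ⟨_, _, hp, hq, ?_⟩
    simp only [heckeWord_cons, ← mul_assoc, heckeGen_mul_comm hij]

theorem heckeWord_eq_of_isRedWord {w : Equiv.Perm (Fin n)} {u v : List (Fin (n - 1))}
    (hu : IsRedWord w u) (hv : IsRedWord w v) : heckeWord u = heckeWord v := by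
  induction hk : invCount w generalizing w u v with
  | zero =>
    rw [List.eq_nil_of_length_eq_zero ((isRedWord_iff.1 hu).2.trans hk),
      List.eq_nil_of_length_eq_zero ((isRedWord_iff.1 hv).2.trans hk)]
  | succ k ih =>
    match u, v, hu, hv with
    | [], _, hu, _ => simp [(isRedWord_iff.1 hu).2.symm] at hk
    | _, [], _, hv => simp [(isRedWord_iff.1 hv).2.symm] at hk
    | i :: u, j :: v, hu, hv =>
      rw [isRedWord_cons_iff] at hu hv
      have hki := invCount_simpleT_mul_of_isLeftDescent hu.1
      have hkj := invCount_simpleT_mul_of_isLeftDescent hv.1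
      obtain ⟨p, q, hp, hq, hpq⟩ := exists_isRedWord_heckeGen_mul_eq hu.1 hv.1
      rw [heckeWord_cons, heckeWord_cons, ih hu.2 hp (by omega), ih hv.2 hq (by omega), hpq]

theorem exists_isRedWord_heckeWord_eq (x : Hecke n) :
    ∃ w u, IsRedWord w u ∧ heckeWord u = x := by
  induction x using Hecke.induction_on with
  | one => exact ⟨1, [], isRedWord_iff.2 ⟨rfl, invCount_one.symm⟩, rfl⟩
  | gen_mul i x ih =>
    obtain ⟨w, u, hu, rfl⟩ := ih
    by_cases hd : IsLeftDescent w i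
    · obtain ⟨r, hr⟩ := exists_isRedWord (simpleT i * w)
      have hir : IsRedWord w (i :: r) := isRedWord_cons_iff.2 ⟨hd, hr⟩
      refine ⟨w, i :: r, hir, ?_⟩
      rw [heckeWord_eq_of_isRedWord hu hir, heckeWord_cons, ← mul_assoc, heckeGen_mul_self]
    · refine ⟨simpleT i * w, i :: u, isRedWord_cons_iff.2 ⟨?_, ?_⟩, rfl⟩
      · exact isLeftDescent_simpleT_mul_iff.2 hd
      · rwa [simpleT_mul_simpleT_mul]

def subwordProds (l : List (Fin (n - 1))) : Set (Equiv.Perm (Fin n)) :=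
  {x | ∃ t, t.Sublist l ∧ wordProd t = x}

theorem self_mem_subwordProds {w : Equiv.Perm (Fin n)} {u : List (Fin (n - 1))}
    (hu : IsRedWord w u) : w ∈ subwordProds u :=
  ⟨u, .refl u, (isRedWord_iff.1 hu).1⟩

theorem invCount_le_of_mem_subwordProds {w x : Equiv.Perm (Fin n)} {u : List (Fin (n - 1))}
    (hu : IsRedWord w u) (hx : x ∈ subwordProds u) : invCount x ≤ invCount w := by
  obtain ⟨t, ht, rfl⟩ := hx
  exact (invCount_wordProd_le t).trans (ht.length_le.trans (isRedWord_iff.1 hu).2.le)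

theorem eq_of_mem_subwordProds_of_invCount_le {w x : Equiv.Perm (Fin n)}
    {u : List (Fin (n - 1))} (hu : IsRedWord w u) (hx : x ∈ subwordProds u)
    (hle : invCount w ≤ invCount x) : x = w := by
  obtain ⟨t, ht, rfl⟩ := hx
  have := invCount_wordProd_le t
  rw [ht.eq_of_length (by have := ht.length_le; have := (isRedWord_iff.1 hu).2; omega)]
  exact (isRedWord_iff.1 hu).1

theorem eq_of_subwordProds_eq {w w' : Equiv.Perm (Fin n)} {u v : List (Fin (n - 1))}
    (hu : IsRedWord w u) (hv : IsRedWord w' v) (h : subwordProds u = subwordProds v) :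
    w = w' := by
  have hw := self_mem_subwordProds hu
  rw [h] at hw
  have hw' := self_mem_subwordProds hv
  rw [← h] at hw'
  exact eq_of_mem_subwordProds_of_invCount_le hv hw
    (invCount_le_of_mem_subwordProds hu hw')

variable (n) in
def heckeRep : Hecke n →* Set (Equiv.Perm (Fin n)) :=
  heckeLift (fun i => {1, simpleT i}) (fun i => pair_mul_self (simpleT_mul_self i))
    (fun _ _ h => pair_mul_pair_comm (simpleT_mul_comm h))
    (fun i j h => pair_mul_pair_mul_pair_comm (simpleT_mul_self i) (simpleT_mul_self j)
      (simpleT_braid h))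

theorem heckeRep_heckeGen (i : Fin (n - 1)) : heckeRep n (heckeGen n i) = {1, simpleT i} :=
  heckeLift_heckeGen _ _ _ i

theorem mrange_heckeRep : MonoidHom.mrange (heckeRep n) =
    Submonoid.closure (Set.range fun i : Fin (n - 1) => ({1, simpleT i} : Set _)) :=
  mrange_heckeLift _ _ _

theorem heckeRep_heckeWord (l : List (Fin (n - 1))) :
    heckeRep n (heckeWord l) = subwordProds l := by
  have hgen : ⇑(heckeRep n) ∘ heckeGen n = (fun a => ({1, a} : Set _)) ∘ simpleT :=
    funext heckeRep_heckeGen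
  rw [heckeWord, map_list_prod, List.map_map, hgen, ← List.map_map, List.prod_map_pair_one]
  ext x
  simp only [subwordProds, List.sublist_map_iff, Set.mem_ofPred_eq]
  constructor
  · rintro ⟨_, ⟨t, ht, rfl⟩, rfl⟩
    exact ⟨t, ht, rfl⟩
  · rintro ⟨t, ht, rfl⟩
    exact ⟨_, ⟨t, ht, rfl⟩, rfl⟩

theorem heckeRep_injective : Function.Injective (heckeRep n) := by
  intro x y hxy
  obtain ⟨w, u, hu, rfl⟩ := exists_isRedWord_heckeWord_eq x
  obtain ⟨w', v, hv, rfl⟩ := exists_isRedWord_heckeWord_eq y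
  rw [heckeRep_heckeWord, heckeRep_heckeWord] at hxy
  obtain rfl := eq_of_subwordProds_eq hu hv hxy
  exact heckeWord_eq_of_isRedWord hu hv

end ZeroHecke

/-- The submonoid of the power set monoid `P(S_n)` generated by the
sets `{id, s_i}` is isomorphic to the 0-Hecke monoid `H_n`, via `e_i ↦ {id, s_i}`. -/
theorem stmt_0 (n : ℕ) :
    ∃ φ : Hecke n ≃* (Submonoid.closure
        (Set.range fun i : Fin (n - 1) => ({1, simpleT i} : Set (Equiv.Perm (Fin n))))),
      ∀ i : Fin (n - 1),
        (φ (heckeGen n i) : Set (Equiv.Perm (Fin n))) = {1, simpleT i} := by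
  have hinj : Function.Injective (ZeroHecke.heckeRep n).mrangeRestrict :=
    fun _ _ h => ZeroHecke.heckeRep_injective (congrArg Subtype.val h)
  exact ⟨(MulEquiv.ofBijective _ ⟨hinj, (ZeroHecke.heckeRep n).mrangeRestrict_surjective⟩).trans
    (MulEquiv.submonoidCongr ZeroHecke.mrange_heckeRep), ZeroHecke.heckeRep_heckeGen⟩
end

section
/- The set CB_n of convex binary relations on {1,...,n} is a submonoid of the monoid B_n of binary relations under relational composition, and it is closed under taking transpose (converse relation). -/
open Pointwise

/-!
The column `j` of `ξ * η` is the union of the columns `k` of `ξ` over the `k` in column `j`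
of `η`, and symmetrically for rows. If `ξ` is reflexive, each column `k` of `ξ` is an interval
containing `k`, and a union of such intervals indexed by an interval is again an interval.
-/

theorem isIntervalSet_setOf_exists_and {n : ℕ} {S : Fin n → Prop} {f : Fin n → Fin n → Prop}
    (hS : IsIntervalSet {k | S k}) (hf : ∀ k, IsIntervalSet {i | f k i}) (hrefl : ∀ k, f k k) :
    IsIntervalSet {i | ∃ k, S k ∧ f k i} := by
  rintro a b c hab hbc ⟨ka, hSa, hfa⟩ ⟨kc, hSc, hfc⟩
  by_cases hb_ka : b ≤ ka
  · exact ⟨ka, hSa, hf ka hab hb_ka hfa (hrefl ka)⟩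
  by_cases hkc_b : kc ≤ b
  · exact ⟨kc, hSc, hf kc hkc_b hbc (hrefl kc) hfc⟩
  push Not at hb_ka hkc_b
  exact ⟨b, hS hb_ka.le hkc_b.le hSa hSc, hrefl b⟩

theorem isConvexRel_one (n : ℕ) : IsConvexRel (1 : BRel n) := by
  have h : ∀ j : Fin n, IsIntervalSet {i | i = j} := by
    rintro j a b c hab hbc rfl rfl
    exact le_antisymm hbc hab
  exact ⟨fun _ => rfl, h, fun j => by simpa only [BRel.one_def, eq_comm] using h j⟩

theorem IsConvexRel.mul {n : ℕ} {ξ η : BRel n} (hξ : IsConvexRel ξ) (hη : IsConvexRel η) :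
    IsConvexRel (ξ * η) := by
  obtain ⟨hξ_refl, hξ_col, hξ_row⟩ := hξ
  obtain ⟨hη_refl, hη_col, hη_row⟩ := hη
  refine ⟨fun i => ⟨i, hξ_refl i, hη_refl i⟩, fun j => ?_, fun j =>
    isIntervalSet_setOf_exists_and (hξ_row j) hη_row hη_refl⟩
  have hcol : {i | (ξ * η) i j} = {i | ∃ k, η k j ∧ ξ i k} :=
    Set.ext fun _ => exists_congr fun _ => and_comm
  rw [hcol]
  exact isIntervalSet_setOf_exists_and (hη_col j) hξ_col hξ_refl

theorem IsConvexRel.transpose {n : ℕ} {ξ : BRel n} (hξ : IsConvexRel ξ) :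
    IsConvexRel fun i j => ξ j i :=
  ⟨hξ.1, hξ.2.2, hξ.2.1⟩

def convexRelSubmonoid (n : ℕ) : Submonoid (BRel n) where
  carrier := {ξ | IsConvexRel ξ}
  mul_mem' := IsConvexRel.mul
  one_mem' := isConvexRel_one n

/-- The convex binary relations form a submonoid of `B_n` closed
under transpose. -/
theorem stmt_3 (n : ℕ) :
    (∃ CB : Submonoid (BRel n), (CB : Set (BRel n)) = {ξ | IsConvexRel ξ}) ∧
    (∀ ξ : BRel n, IsConvexRel ξ → IsConvexRel fun i j => ξ j i) :=
  ⟨⟨convexRelSubmonoid n, rfl⟩, fun _ => IsConvexRel.transpose⟩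
end

section
/- The map Θ sending a convex binary relation ξ on {1,...,n} to the pair (max(ξ), min(ξ)) is an isomorphism of ordered monoids from the monoid CB_n of convex binary relations (ordered by inclusion) onto the product C_n^+ × C_n^- of the monoid of order-preserving non-decreasing transformations with the monoid of order-preserving non-increasing transformations of {1,...,n} (with the pointwise and opposite-pointwise orders respectively). -/
open Pointwise

/-!
A convex relation is determined by its columns, which are the intervals
`[minF ξ j, maxF ξ j]`; convexity of the rows makes both endpoint maps monotone.
Conversely, monotone maps `lo ≤ id ≤ hi` bound the columns of a convex relation, and
composing two such relations composes the endpoint maps: if `lo (lo' j) ≤ i ≤ hi (hi' j)`,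
clamping `i` into `[lo' j, hi' j]` gives the intermediate point of the composite.
-/

theorem exists_mem_Icc_lo_le_and_le_hi {α : Type*} [LinearOrder α] {lo hi : α → α}
    (hlo_mono : Monotone lo) (hhi_mono : Monotone hi) (hlo : ∀ x, lo x ≤ x) (hhi : ∀ x, x ≤ hi x)
    {a b i : α} (hab : a ≤ b) (hai : lo a ≤ i) (hib : i ≤ hi b) :
    ∃ k ∈ Set.Icc a b, lo k ≤ i ∧ i ≤ hi k := by
  refine ⟨max a (min i b), ⟨le_max_left _ _, max_le hab (min_le_right _ _)⟩, ?_, ?_⟩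
  · calc lo (max a (min i b)) ≤ lo (max a i) := hlo_mono (max_le_max le_rfl (min_le_left _ _))
      _ = max (lo a) (lo i) := hlo_mono.map_max
      _ ≤ i := max_le hai (hlo i)
  · calc i ≤ min (hi i) (hi b) := le_min (hhi i) hib
      _ = hi (min i b) := hhi_mono.map_min.symm
      _ ≤ hi (max a (min i b)) := hhi_mono (le_max_right _ _)

namespace BRel

variable {n : ℕ}

def icc (lo hi : Fin n → Fin n) : BRel n := fun i j => i ∈ Set.Icc (lo j) (hi j)

theorem one_eq_icc : (1 : BRel n) = icc id id := by
  funext i j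
  simp only [icc, one_def, id, Set.mem_Icc, le_antisymm_iff, and_comm]

theorem icc_refl {lo hi : Fin n → Fin n} (hlo : ∀ j, lo j ≤ j) (hhi : ∀ j, j ≤ hi j) (j : Fin n) :
    icc lo hi j j :=
  ⟨hlo j, hhi j⟩

theorem isConvexRel_icc {lo hi : Fin n → Fin n} (hlo_mono : Monotone lo) (hhi_mono : Monotone hi)
    (hlo : ∀ j, lo j ≤ j) (hhi : ∀ j, j ≤ hi j) : IsConvexRel (icc lo hi) :=
  ⟨icc_refl hlo hhi,
    fun _ _ _ _ hab hbc ha hc => ⟨ha.1.trans hab, hbc.trans hc.2⟩,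
    fun _ _ _ _ hab hbc ha hc => ⟨(hlo_mono hbc).trans hc.1, ha.2.trans (hhi_mono hab)⟩⟩

theorem icc_mul_icc {lo hi lo' hi' : Fin n → Fin n} (hlo_mono : Monotone lo)
    (hhi_mono : Monotone hi) (hlo : ∀ j, lo j ≤ j) (hhi : ∀ j, j ≤ hi j)
    (hlo_hi' : ∀ j, lo' j ≤ hi' j) :
    icc lo hi * icc lo' hi' = icc (lo ∘ lo') (hi ∘ hi') := by
  funext i j
  apply propext
  rw [mul_def]
  constructor
  · rintro ⟨k, ⟨hik, hki⟩, hkj, hjk⟩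
    exact ⟨(hlo_mono hkj).trans hik, hki.trans (hhi_mono hjk)⟩
  · rintro ⟨hi_lo, hi_hi⟩
    obtain ⟨k, hk, hik⟩ :=
      exists_mem_Icc_lo_le_and_le_hi hlo_mono hhi_mono hlo hhi (hlo_hi' j) hi_lo hi_hi
    exact ⟨k, hik, hk⟩

end BRel

section MaxMin

open Classical

variable {n : ℕ} {ξ : BRel n}

theorem le_maxF (ξ : BRel n) (j : Fin n) : j ≤ maxF ξ j :=
  Finset.le_max' _ _ (Finset.mem_insert_self _ _)

theorem minF_le (ξ : BRel n) (j : Fin n) : minF ξ j ≤ j :=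
  Finset.min'_le _ _ (Finset.mem_insert_self _ _)

theorem le_maxF_of_rel {i j : Fin n} (h : ξ i j) : i ≤ maxF ξ j :=
  Finset.le_max' _ _ (Finset.mem_insert_of_mem (by simpa using h))

theorem minF_le_of_rel {i j : Fin n} (h : ξ i j) : minF ξ j ≤ i :=
  Finset.min'_le _ _ (Finset.mem_insert_of_mem (by simpa using h))

theorem rel_maxF (hrefl : ∀ i, ξ i i) (j : Fin n) : ξ (maxF ξ j) j := by
  have h : maxF ξ j ∈ insert j (Finset.univ.filter fun i => ξ i j) := Finset.max'_mem _ _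
  obtain h | h := Finset.mem_insert.1 h
  · rw [h]; exact hrefl j
  · exact (Finset.mem_filter.1 h).2

theorem rel_minF (hrefl : ∀ i, ξ i i) (j : Fin n) : ξ (minF ξ j) j := by
  have h : minF ξ j ∈ insert j (Finset.univ.filter fun i => ξ i j) := Finset.min'_mem _ _
  obtain h | h := Finset.mem_insert.1 h
  · rw [h]; exact hrefl j
  · exact (Finset.mem_filter.1 h).2

theorem maxF_icc {lo hi : Fin n → Fin n} (hlo : ∀ j, lo j ≤ j) (hhi : ∀ j, j ≤ hi j)
    (j : Fin n) : maxF (BRel.icc lo hi) j = hi j :=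
  le_antisymm (rel_maxF (BRel.icc_refl hlo hhi) j).2
    (le_maxF_of_rel ⟨(hlo j).trans (hhi j), le_rfl⟩)

theorem minF_icc {lo hi : Fin n → Fin n} (hlo : ∀ j, lo j ≤ j) (hhi : ∀ j, j ≤ hi j)
    (j : Fin n) : minF (BRel.icc lo hi) j = lo j :=
  le_antisymm (minF_le_of_rel ⟨le_rfl, (hlo j).trans (hhi j)⟩)
    (rel_minF (BRel.icc_refl hlo hhi) j).1

end MaxMin

namespace IsConvexRel

variable {n : ℕ} {ξ η : BRel n}

theorem rel_iff (hξ : IsConvexRel ξ) {i j : Fin n} : ξ i j ↔ minF ξ j ≤ i ∧ i ≤ maxF ξ j :=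
  ⟨fun h => ⟨minF_le_of_rel h, le_maxF_of_rel h⟩,
    fun ⟨h₁, h₂⟩ => hξ.2.1 j h₁ h₂ (rel_minF hξ.1 j) (rel_maxF hξ.1 j)⟩

theorem eq_icc (hξ : IsConvexRel ξ) : ξ = BRel.icc (minF ξ) (maxF ξ) := by
  funext i j
  exact propext hξ.rel_iff

theorem monotone_maxF (hξ : IsConvexRel ξ) : Monotone (maxF ξ) := by
  intro j j' hjj'
  rcases le_total (maxF ξ j) j' with h | h
  · exact h.trans (le_maxF ξ j')
  · exact le_maxF_of_rel (hξ.2.2 (maxF ξ j) hjj' h (rel_maxF hξ.1 j) (hξ.1 _))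

theorem monotone_minF (hξ : IsConvexRel ξ) : Monotone (minF ξ) := by
  intro j j' hjj'
  rcases le_total j (minF ξ j') with h | h
  · exact (minF_le ξ j).trans h
  · exact minF_le_of_rel (hξ.2.2 (minF ξ j') h hjj' (hξ.1 _) (rel_minF hξ.1 j'))

theorem mul_eq_icc (hξ : IsConvexRel ξ) (hη : IsConvexRel η) :
    ξ * η = BRel.icc (minF ξ ∘ minF η) (maxF ξ ∘ maxF η) := by
  conv_lhs => rw [hξ.eq_icc, hη.eq_icc]
  exact BRel.icc_mul_icc hξ.monotone_minF hξ.monotone_maxF (minF_le ξ) (le_maxF ξ)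
    fun j => (minF_le η j).trans (le_maxF η j)

theorem mul_s4 (hξ : IsConvexRel ξ) (hη : IsConvexRel η) : IsConvexRel (ξ * η) := by
  rw [hξ.mul_eq_icc hη]
  exact BRel.isConvexRel_icc (hξ.monotone_minF.comp hη.monotone_minF)
    (hξ.monotone_maxF.comp hη.monotone_maxF)
    (fun j => (minF_le ξ _).trans (minF_le η j)) (fun j => (le_maxF η j).trans (le_maxF ξ _))

theorem maxF_mul (hξ : IsConvexRel ξ) (hη : IsConvexRel η) :
    maxF (ξ * η) = maxF ξ ∘ maxF η := by
  rw [hξ.mul_eq_icc hη]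
  exact funext <| maxF_icc (fun j => (minF_le ξ _).trans (minF_le η j))
    (fun j => (le_maxF η j).trans (le_maxF ξ _))

theorem minF_mul (hξ : IsConvexRel ξ) (hη : IsConvexRel η) :
    minF (ξ * η) = minF ξ ∘ minF η := by
  rw [hξ.mul_eq_icc hη]
  exact funext <| minF_icc (fun j => (minF_le ξ _).trans (minF_le η j))
    (fun j => (le_maxF η j).trans (le_maxF ξ _))

theorem le_iff (hξ : IsConvexRel ξ) (hη : IsConvexRel η) :
    (∀ i j, ξ i j → η i j) ↔ (∀ j, maxF ξ j ≤ maxF η j) ∧ (∀ j, minF η j ≤ minF ξ j) := by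
  refine ⟨fun h => ⟨fun j => le_maxF_of_rel (h _ _ (rel_maxF hξ.1 j)),
    fun j => minF_le_of_rel (h _ _ (rel_minF hξ.1 j))⟩, fun ⟨hmax, hmin⟩ i j hij => ?_⟩
  obtain ⟨hlo, hhi⟩ := hξ.rel_iff.1 hij
  exact hη.rel_iff.2 ⟨(hmin j).trans hlo, hhi.trans (hmax j)⟩

end IsConvexRel

def convexSubmonoid (n : ℕ) : Submonoid (BRel n) where
  carrier := {ξ | IsConvexRel ξ}
  one_mem' := by
    change IsConvexRel 1
    rw [BRel.one_eq_icc]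
    exact BRel.isConvexRel_icc monotone_id monotone_id (fun _ => le_rfl) (fun _ => le_rfl)
  mul_mem' := IsConvexRel.mul_s4

noncomputable def convexMulEquiv (n : ℕ) : convexSubmonoid n ≃* Cplus n × Cminus n where
  toFun ξ := (⟨maxF ξ.1, ξ.2.monotone_maxF, le_maxF ξ.1⟩,
    ⟨minF ξ.1, ξ.2.monotone_minF, minF_le ξ.1⟩)
  invFun p := ⟨BRel.icc p.2.1 p.1.1, BRel.isConvexRel_icc p.2.2.1 p.1.2.1 p.2.2.2 p.1.2.2⟩
  left_inv ξ := Subtype.ext ξ.2.eq_icc.symm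
  right_inv p := Prod.ext (Subtype.ext (funext (maxF_icc p.2.2.2 p.1.2.2)))
    (Subtype.ext (funext (minF_icc p.2.2.2 p.1.2.2)))
  map_mul' ξ η := Prod.ext (Subtype.ext (ξ.2.maxF_mul η.2)) (Subtype.ext (ξ.2.minF_mul η.2))

/-- `Θ : ξ ↦ (max(ξ), min(ξ))` is an isomorphism of ordered monoids
from the monoid `CB_n` of convex binary relations (ordered by inclusion) onto
`C_n^+ × C_n^-` (pointwise and opposite-pointwise orders). -/
theorem stmt_4 (n : ℕ) :
    ∃ CB : Submonoid (BRel n), (CB : Set (BRel n)) = {ξ | IsConvexRel ξ} ∧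
      ∃ Θ : CB ≃* (Cplus n × Cminus n),
        (∀ ξ : CB, ((Θ ξ).1 : Function.End (Fin n)) = maxF ξ.1 ∧
                   ((Θ ξ).2 : Function.End (Fin n)) = minF ξ.1) ∧
        (∀ ξ η : CB, (∀ i j, ξ.1 i j → η.1 i j) ↔
          ((∀ j, ((Θ ξ).1 : Function.End (Fin n)) j ≤ ((Θ η).1 : Function.End (Fin n)) j) ∧
           (∀ j, ((Θ η).2 : Function.End (Fin n)) j ≤ ((Θ ξ).2 : Function.End (Fin n)) j))) :=
  ⟨convexSubmonoid n, rfl, convexMulEquiv n, fun _ => ⟨rfl, rfl⟩, fun ξ η => ξ.2.le_iff η.2⟩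
end

section
/- The elements ε_i = Φ(id) + Φ(s_i) of the monoid of n×n Boolean matrices (where Φ embeds S_n as permutation matrices, sum is entrywise Boolean OR) satisfy ε_i² = ε_i, ε_i ε_j = ε_j ε_i for |i−j| ≥ 2, and ε_i ε_{i+1} ε_i = ε_{i+1} ε_i ε_{i+1}; consequently there is a unique surjective monoid homomorphism Ψ from the 0-Hecke monoid H_n onto the double Catalan monoid DC_n = ⟨ε_1,...,ε_{n-1}⟩ with Ψ(e_i) = ε_i. -/
open Pointwise

/-!
Over the Boolean semiring a product `(1 + Φ(σ₁)) ⋯ (1 + Φ(σₘ))` is the sum of `Φ` over all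
subwords of `σ₁ ⋯ σₘ`, so the 0-Hecke relations for `ε_i = 1 + Φ(s_i)` follow from `s_i² = 1`
and the commutation and braid relations of the `s_i` in `S_n`. The homomorphism `Ψ` is then
given by the universal property of the presentation of `H_n`; it is unique because the `e_i`
generate `H_n`, and surjective because the `ε_i` generate `DC_n`.
-/

open Equiv

section SimpleTranspositions

variable {n : ℕ}

lemma simpleT_involutive (i : Fin (n - 1)) : Function.Involutive (simpleT (n := n) i) :=
  swap_apply_self _ _

lemma simpleT_commute {i j : Fin (n - 1)} (h : i.1 + 2 ≤ j.1) :
    Commute (simpleT (n := n) i) (simpleT j) := by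
  rw [Commute, SemiconjBy, simpleT, simpleT, mul_swap_eq_swap_mul,
    swap_apply_of_ne_of_ne, swap_apply_of_ne_of_ne] <;>
    simp only [ne_eq, Fin.ext_iff, Nat.add_right_cancel_iff] <;> omega

lemma simpleT_braid {i j : Fin (n - 1)} (h : j.1 = i.1 + 1) :
    simpleT (n := n) i * simpleT j * simpleT i = simpleT j * simpleT i * simpleT j := by
  set x : Fin n := ⟨i.1, by omega⟩
  set y : Fin n := ⟨i.1 + 1, by omega⟩
  set z : Fin n := ⟨i.1 + 2, by omega⟩
  have hi : simpleT i = swap x y := rfl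
  have hj : simpleT j = swap y z := by simp only [simpleT, h]; rfl
  have hxy : x ≠ y := by simp [x, y, Fin.ext_iff]
  have hxz : x ≠ z := by simp [x, z, Fin.ext_iff]
  have hyz : y ≠ z := by simp [y, z, Fin.ext_iff]
  rw [hi, hj, swap_mul_swap_mul_swap hxy hxz, swap_comm x y, swap_comm y z,
    swap_mul_swap_mul_swap hyz.symm hxz.symm, swap_comm]

end SimpleTranspositions

section OnePlusPerm

variable {n : ℕ}

def onePlusPerm (σ : Perm (Fin n)) : BRel n := fun a b => a = b ∨ a = σ b

lemma mul_onePlusPerm_apply (ξ : BRel n) (σ : Perm (Fin n)) (a b : Fin n) :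
    (ξ * onePlusPerm σ) a b ↔ ξ a b ∨ ξ a (σ b) := by
  simp only [BRel.mul_def, onePlusPerm]
  constructor
  · rintro ⟨k, hk, rfl | rfl⟩ <;> tauto
  · rintro (h | h) <;> exact ⟨_, h, by tauto⟩

variable {σ τ : Perm (Fin n)}

lemma onePlusPerm_mul_self (hσ : Function.Involutive σ) :
    onePlusPerm σ * onePlusPerm σ = onePlusPerm σ := by
  funext a b
  apply propext
  simp only [mul_onePlusPerm_apply, onePlusPerm, hσ b]
  tauto

lemma onePlusPerm_mul_comm (h : Commute σ τ) :
    onePlusPerm σ * onePlusPerm τ = onePlusPerm τ * onePlusPerm σ := by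
  have hστ b : σ (τ b) = τ (σ b) := DFunLike.congr_fun h.eq b
  funext a b
  apply propext
  simp only [mul_onePlusPerm_apply, onePlusPerm, hστ]
  tauto

lemma onePlusPerm_braid (hσ : Function.Involutive σ) (hτ : Function.Involutive τ)
    (h : σ * τ * σ = τ * σ * τ) :
    onePlusPerm σ * onePlusPerm τ * onePlusPerm σ =
      onePlusPerm τ * onePlusPerm σ * onePlusPerm τ := by
  -- both sides are `1 + σ + τ + στ + τσ + στσ`
  have hστσ b : σ (τ (σ b)) = τ (σ (τ b)) := DFunLike.congr_fun h b
  funext a b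
  apply propext
  simp only [mul_onePlusPerm_apply, onePlusPerm, hσ _, hτ _, hστσ]
  tauto

end OnePlusPerm

section Eps

variable {n : ℕ}

lemma eps_mul_self (i : Fin (n - 1)) : eps (n := n) i * eps i = eps i :=
  onePlusPerm_mul_self (simpleT_involutive i)

lemma eps_mul_comm {i j : Fin (n - 1)} (h : i.1 + 2 ≤ j.1) :
    eps (n := n) i * eps j = eps j * eps i :=
  onePlusPerm_mul_comm (simpleT_commute h)

lemma eps_braid {i j : Fin (n - 1)} (h : j.1 = i.1 + 1) :
    eps (n := n) i * eps j * eps i = eps j * eps i * eps j :=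
  onePlusPerm_braid (simpleT_involutive i) (simpleT_involutive j) (simpleT_braid h)

end Eps

lemma MonoidHom.surjective_of_mclosure_eq_top {M N : Type*} [Monoid M] [Monoid N] {s : Set M}
    (hs : Submonoid.closure s = ⊤) (f : M →* N) (hfs : Submonoid.closure (f '' s) = ⊤) :
    Function.Surjective f := by
  rw [← MonoidHom.mrange_eq_top, MonoidHom.mrange_eq_map, ← hs, MonoidHom.map_mclosure, hfs]

namespace Hecke

variable {n : ℕ} {M : Type*} [Monoid M]

def lift (f : Fin (n - 1) → M) (h_idem : ∀ i, f i * f i = f i)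
    (h_comm : ∀ i j, i.1 + 2 ≤ j.1 → f i * f j = f j * f i)
    (h_braid : ∀ i j, j.1 = i.1 + 1 → f i * f j * f i = f j * f i * f j) : Hecke n →* M :=
  PresentedMonoid.lift (rels := fun a b => (a, b) ∈ heckeRels n) f <| by
    rintro _ _ (⟨i, hab⟩ | ⟨i, j, hij, hab⟩ | ⟨i, j, hij, hab⟩) <;>
      obtain ⟨rfl, rfl⟩ := Prod.ext_iff.1 hab <;> simp only [map_mul, FreeMonoid.lift_eval_of]
    exacts [h_idem i, h_comm i j hij, h_braid i j hij]

@[simp]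
lemma lift_heckeGen (f : Fin (n - 1) → M) (h_idem h_comm h_braid) (i : Fin (n - 1)) :
    lift f h_idem h_comm h_braid (heckeGen n i) = f i :=
  rfl

lemma closure_range_heckeGen : Submonoid.closure (Set.range (heckeGen n)) = ⊤ :=
  PresentedMonoid.closure_range_of _

lemma hom_ext {φ ψ : Hecke n →* M} (h : ∀ i, φ (heckeGen n i) = ψ (heckeGen n i)) : φ = ψ :=
  PresentedMonoid.ext _ h

lemma surjective_of_closure_range_eq_top (φ : Hecke n →* M)
    (h : Submonoid.closure (Set.range (φ ∘ heckeGen n)) = ⊤) : Function.Surjective φ :=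
  φ.surjective_of_mclosure_eq_top closure_range_heckeGen (by rwa [← Set.range_comp])

end Hecke

namespace DC

variable {n : ℕ}

def gen (i : Fin (n - 1)) : DC n := ⟨eps i, Submonoid.subset_closure (Set.mem_range_self i)⟩

lemma closure_range_gen : Submonoid.closure (Set.range (gen (n := n))) = ⊤ := by
  have : Set.range (gen (n := n)) = ((↑) : DC n → BRel n) ⁻¹' Set.range eps := by
    ext x
    simp [gen, Subtype.ext_iff]
  rw [this]
  exact Submonoid.closure_closure_coe_preimage

def psi : Hecke n →* DC n :=
  Hecke.lift gen (fun i => Subtype.ext (eps_mul_self i))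
    (fun _ _ h => Subtype.ext (eps_mul_comm h)) (fun _ _ h => Subtype.ext (eps_braid h))

end DC

/-- The `ε_i` satisfy the 0-Hecke relations, and consequently there is a
unique (surjective) monoid homomorphism `Ψ : H_n → DC_n` with `Ψ(e_i) = ε_i`. -/
theorem stmt_5 (n : ℕ) :
    (∀ i : Fin (n - 1), eps (n := n) i * eps i = eps i) ∧
    (∀ i j : Fin (n - 1), (i.1 + 2 ≤ j.1 ∨ j.1 + 2 ≤ i.1) →
      eps (n := n) i * eps j = eps j * eps i) ∧
    (∀ i j : Fin (n - 1), j.1 = i.1 + 1 →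
      eps (n := n) i * eps j * eps i = eps j * eps i * eps j) ∧
    ∃ Ψ : Hecke n →* DC n,
      (∀ i, Ψ (heckeGen n i) = ⟨eps i, Submonoid.subset_closure (Set.mem_range_self i)⟩) ∧
      Function.Surjective Ψ ∧
      ∀ Ψ' : Hecke n →* DC n,
        (∀ i, Ψ' (heckeGen n i) = ⟨eps i, Submonoid.subset_closure (Set.mem_range_self i)⟩) →
          Ψ' = Ψ := by
  refine ⟨eps_mul_self, fun i j h => h.elim eps_mul_comm (eps_mul_comm · |>.symm),
    fun i j => eps_braid, DC.psi, fun i => Hecke.lift_heckeGen _ _ _ _ i,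
    Hecke.surjective_of_closure_range_eq_top _ DC.closure_range_gen,
    fun _ h => Hecke.hom_ext h⟩
end

section
/- For every permutation w ∈ S_n, the Boolean matrix Ψ(z_w) representing the image of w in the double Catalan monoid satisfies max(Ψ(z_w)) = α_w and min(Ψ(z_w)) = β_w, where α_w(i) = max{w(j) : j ≤ i} is the left-to-right maximum function and β_w(i) = min{w(j) : j ≥ i} is the right-to-left minimum function. Explicitly, the (i,j)-entry of Ψ(z_w) is 1 if and only if β_w(j) ≤ i ≤ α_w(j). -/
open Pointwise

/-!
The length of a permutation is its number of inversions, so along a reduced word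
`s_{i_1} ⋯ s_{i_k}` of `w` each letter `s_i` is an ascent `u(i) < u(i+1)` of the prefix `u`
read so far. Right multiplication by `ε_i` replaces columns `i` and `i+1` of a Boolean matrix
by their union. In `psiMat u` these columns are the intervals `[β_u(i), α_u(i)]` and
`[β_u(i+1), α_u(i+1)]`, which overlap or abut, so their union is `[β_u(i), α_u(i+1)]`.
Passing from `u` to `u s_i` changes `α` only at `i`, to `α_u(i+1)`, and `β` only at `i+1`,
to `β_u(i)`. Hence `psiMat u * ε_i = psiMat (u s_i)`, and induction along the word gives
`Ψ(z_w) = psiMat w`.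
-/

section SimpleTransposition

variable {n : ℕ}

def swapLo (i : Fin (n - 1)) : Fin n := ⟨i, by omega⟩

def swapHi (i : Fin (n - 1)) : Fin n := ⟨i + 1, by omega⟩

theorem simpleT_eq_swap (i : Fin (n - 1)) : simpleT i = Equiv.swap (swapLo i) (swapHi i) := rfl

theorem swapLo_lt_swapHi (i : Fin (n - 1)) : swapLo i < swapHi i :=
  Fin.lt_def.2 (Nat.lt_succ_self _)

@[simp]
theorem simpleT_swapLo (i : Fin (n - 1)) : simpleT i (swapLo i) = swapHi i :=
  Equiv.swap_apply_left _ _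

@[simp]
theorem simpleT_swapHi (i : Fin (n - 1)) : simpleT i (swapHi i) = swapLo i :=
  Equiv.swap_apply_right _ _

theorem simpleT_apply_of_ne {i : Fin (n - 1)} {a : Fin n} (hlo : a ≠ swapLo i)
    (hhi : a ≠ swapHi i) : simpleT i a = a :=
  Equiv.swap_apply_of_ne_of_ne hlo hhi

@[simp]
theorem simpleT_simpleT (i : Fin (n - 1)) (a : Fin n) : simpleT i (simpleT i a) = a :=
  Equiv.swap_apply_self _ _ _

@[simp]
theorem simpleT_symm (i : Fin (n - 1)) : (simpleT i).symm = simpleT i :=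
  Equiv.symm_swap _ _

@[simp]
theorem mul_simpleT_mul_simpleT (w : Equiv.Perm (Fin n)) (i : Fin (n - 1)) :
    w * simpleT i * simpleT i = w := by
  rw [mul_assoc, simpleT_eq_swap, Equiv.swap_mul_self, mul_one]

theorem simpleT_lt_simpleT_iff {i : Fin (n - 1)} {a b : Fin n}
    (hab : (a, b) ≠ (swapLo i, swapHi i)) (hba : (a, b) ≠ (swapHi i, swapLo i)) :
    simpleT i a < simpleT i b ↔ a < b := by
  simp only [ne_eq, Prod.mk.injEq, not_and] at hab hba
  simp only [simpleT_eq_swap, Equiv.swap_apply_def]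
  split_ifs <;> simp only [Fin.lt_def, Fin.ext_iff, swapLo, swapHi] at * <;> omega

theorem simpleT_le_iff {i : Fin (n - 1)} {a b : Fin n} (hb : b ≠ swapLo i) :
    simpleT i a ≤ b ↔ a ≤ b := by
  simp only [simpleT_eq_swap, Equiv.swap_apply_def]
  split_ifs <;> simp only [Fin.le_def, Fin.ext_iff, ne_eq, swapLo, swapHi] at * <;> omega

theorem le_simpleT_iff {i : Fin (n - 1)} {a b : Fin n} (ha : a ≠ swapHi i) :
    a ≤ simpleT i b ↔ a ≤ b := by
  simp only [simpleT_eq_swap, Equiv.swap_apply_def]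
  split_ifs <;> simp only [Fin.le_def, Fin.ext_iff, ne_eq, swapLo, swapHi] at * <;> omega

theorem simpleT_le_swapLo {i : Fin (n - 1)} {a : Fin n} (ha : a ≤ swapHi i)
    (hne : a ≠ swapLo i) : simpleT i a ≤ swapLo i := by
  simp only [simpleT_eq_swap, Equiv.swap_apply_def]
  split_ifs <;> simp only [Fin.le_def, Fin.ext_iff, ne_eq, swapLo, swapHi] at * <;> omega

theorem swapHi_le_simpleT {i : Fin (n - 1)} {a : Fin n} (ha : swapLo i ≤ a)
    (hne : a ≠ swapHi i) : swapHi i ≤ simpleT i a := by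
  simp only [simpleT_eq_swap, Equiv.swap_apply_def]
  split_ifs <;> simp only [Fin.le_def, Fin.ext_iff, ne_eq, swapLo, swapHi] at * <;> omega

theorem swapHi_le_of_swapLo_lt {i : Fin (n - 1)} {a : Fin n} (h : swapLo i < a) :
    swapHi i ≤ a := by
  simp only [Fin.lt_def, Fin.le_def, swapLo, swapHi] at *
  omega

theorem apply_swapLo_lt_or_gt (w : Equiv.Perm (Fin n)) (i : Fin (n - 1)) :
    w (swapLo i) < w (swapHi i) ∨ w (swapHi i) < w (swapLo i) :=
  lt_or_gt_of_ne (w.injective.ne (swapLo_lt_swapHi i).ne)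

theorem eq_one_of_forall_apply_swapLo_lt {w : Equiv.Perm (Fin n)}
    (h : ∀ i, w (swapLo i) < w (swapHi i)) : w = 1 := by
  suffices hmono : StrictMono w from Equiv.ext fun _ => hmono.apply_eq
  cases n with
  | zero => exact fun a => a.elim0
  | succ m => exact Fin.strictMono_iff_lt_succ.2 h

end SimpleTransposition

section PrefixExtrema

variable {n : ℕ} (w : Equiv.Perm (Fin n))

theorem lrMax_le_iff {j m : Fin n} : lrMax w j ≤ m ↔ ∀ k ≤ j, w k ≤ m := by
  unfold lrMax
  exact (Finset.sup'_le_iff _ _).trans (by simp only [Finset.mem_Iic])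

theorem le_rlMin_iff {j m : Fin n} : m ≤ rlMin w j ↔ ∀ k, j ≤ k → m ≤ w k := by
  unfold rlMin
  exact (Finset.le_inf'_iff _ _).trans (by simp only [Finset.mem_Ici])

theorem le_lrMax {j k : Fin n} (h : k ≤ j) : w k ≤ lrMax w j :=
  (lrMax_le_iff w).1 le_rfl k h

theorem rlMin_le {j k : Fin n} (h : j ≤ k) : rlMin w j ≤ w k :=
  (le_rlMin_iff w).1 le_rfl k h

theorem lrMax_mono : Monotone (lrMax w) := fun _ _ hjj' =>
  (lrMax_le_iff w).2 fun _ hk => le_lrMax w (hk.trans hjj')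

theorem rlMin_mono : Monotone (rlMin w) := fun _ _ hjj' =>
  (le_rlMin_iff w).2 fun _ hk => rlMin_le w (hjj'.trans hk)

/-- Pigeonhole: `w` maps the `j + 1` points of `Iic j` injectively into `Iic (lrMax w j)`. -/
theorem self_le_lrMax (j : Fin n) : j ≤ lrMax w j := by
  have hsub : (Finset.Iic j).map w.toEmbedding ⊆ Finset.Iic (lrMax w j) := by
    intro x hx
    obtain ⟨k, hk, rfl⟩ := Finset.mem_map.1 hx
    exact Finset.mem_Iic.2 (le_lrMax w (Finset.mem_Iic.1 hk))
  have hcard := Finset.card_le_card hsub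
  rw [Finset.card_map, Fin.card_Iic, Fin.card_Iic] at hcard
  exact Fin.le_def.2 (by omega)

theorem rlMin_le_self (j : Fin n) : rlMin w j ≤ j := by
  have hsub : (Finset.Ici j).map w.toEmbedding ⊆ Finset.Ici (rlMin w j) := by
    intro x hx
    obtain ⟨k, hk, rfl⟩ := Finset.mem_map.1 hx
    exact Finset.mem_Ici.2 (rlMin_le w (Finset.mem_Ici.1 hk))
  have hcard := Finset.card_le_card hsub
  rw [Finset.card_map, Fin.card_Ici, Fin.card_Ici] at hcard
  exact Fin.le_def.2 (by omega)

@[simp]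
theorem lrMax_one (j : Fin n) : lrMax 1 j = j :=
  le_antisymm ((lrMax_le_iff 1).2 fun _ hk => hk) (self_le_lrMax 1 j)

@[simp]
theorem rlMin_one (j : Fin n) : rlMin 1 j = j :=
  le_antisymm (rlMin_le_self 1 j) ((le_rlMin_iff 1).2 fun _ hk => hk)

variable {i : Fin (n - 1)}

theorem lrMax_mul_simpleT_of_ne {j : Fin n} (hj : j ≠ swapLo i) :
    lrMax (w * simpleT i) j = lrMax w j := by
  refine eq_of_forall_ge_iff fun m => ?_
  simp only [lrMax_le_iff, Equiv.Perm.mul_apply]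
  refine ⟨fun h k hk => ?_, fun h k hk => h _ ((simpleT_le_iff hj).2 hk)⟩
  simpa using h (simpleT i k) ((simpleT_le_iff hj).2 hk)

theorem rlMin_mul_simpleT_of_ne {j : Fin n} (hj : j ≠ swapHi i) :
    rlMin (w * simpleT i) j = rlMin w j := by
  refine eq_of_forall_le_iff fun m => ?_
  simp only [le_rlMin_iff, Equiv.Perm.mul_apply]
  refine ⟨fun h k hk => ?_, fun h k hk => h _ ((le_simpleT_iff hj).2 hk)⟩
  simpa using h (simpleT i k) ((le_simpleT_iff hj).2 hk)

theorem lrMax_mul_simpleT_swapLo (h : w (swapLo i) < w (swapHi i)) :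
    lrMax (w * simpleT i) (swapLo i) = lrMax w (swapHi i) := by
  refine eq_of_forall_ge_iff fun m => ?_
  simp only [lrMax_le_iff, Equiv.Perm.mul_apply]
  refine ⟨fun H k hk => ?_, fun H k hk => H _ ?_⟩
  · by_cases hlo : k = swapLo i
    · subst hlo
      exact h.le.trans (by simpa using H _ le_rfl)
    · simpa using H _ (simpleT_le_swapLo hk hlo)
  · by_cases hlo : k = swapLo i
    · simp [hlo]
    · rw [simpleT_apply_of_ne hlo (hk.trans_lt (swapLo_lt_swapHi i)).ne]
      exact hk.trans (swapLo_lt_swapHi i).le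

theorem rlMin_mul_simpleT_swapHi (h : w (swapLo i) < w (swapHi i)) :
    rlMin (w * simpleT i) (swapHi i) = rlMin w (swapLo i) := by
  refine eq_of_forall_le_iff fun m => ?_
  simp only [le_rlMin_iff, Equiv.Perm.mul_apply]
  refine ⟨fun H k hk => ?_, fun H k hk => H _ ?_⟩
  · by_cases hhi : k = swapHi i
    · subst hhi
      exact (by simpa using H _ le_rfl : m ≤ w (swapLo i)).trans h.le
    · simpa using H _ (swapHi_le_simpleT hk hhi)
  · by_cases hhi : k = swapHi i
    · simp [hhi]
    · rw [simpleT_apply_of_ne ((swapLo_lt_swapHi i).trans_le hk).ne' hhi]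
      exact (swapLo_lt_swapHi i).le.trans hk

end PrefixExtrema

section PsiMatrix

variable {n : ℕ}

theorem psiMat_apply (w : Equiv.Perm (Fin n)) (a b : Fin n) :
    psiMat w a b ↔ rlMin w b ≤ a ∧ a ≤ lrMax w b :=
  Iff.rfl

@[simp]
theorem psiMat_one : psiMat (1 : Equiv.Perm (Fin n)) = 1 := by
  funext a b
  apply propext
  simp only [psiMat_apply, rlMin_one, lrMax_one, BRel.one_def, le_antisymm_iff]
  exact and_comm

theorem mul_eps_apply (ξ : BRel n) (i : Fin (n - 1)) (a b : Fin n) :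
    (ξ * eps i) a b ↔ ξ a b ∨ ξ a (simpleT i b) := by
  simp only [BRel.mul_def, eps, and_or_left, exists_or, exists_eq_right]

/-- The two columns overlap or abut: a row `a` strictly between them would be `w m` with
`m ≤ swapLo i` or `swapHi i ≤ m`. -/
theorem psiMat_swapLo_or_swapHi_iff (w : Equiv.Perm (Fin n)) (i : Fin (n - 1)) (a : Fin n) :
    psiMat w a (swapLo i) ∨ psiMat w a (swapHi i) ↔
      rlMin w (swapLo i) ≤ a ∧ a ≤ lrMax w (swapHi i) := by
  have hle := (swapLo_lt_swapHi i).le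
  constructor
  · rintro (⟨hmin, hmax⟩ | ⟨hmin, hmax⟩)
    · exact ⟨hmin, hmax.trans (lrMax_mono w hle)⟩
    · exact ⟨(rlMin_mono w hle).trans hmin, hmax⟩
  · rintro ⟨hmin, hmax⟩
    obtain ⟨m, rfl⟩ := w.surjective a
    rcases le_or_gt m (swapLo i) with hm | hm
    · exact Or.inl ⟨hmin, le_lrMax w hm⟩
    · exact Or.inr ⟨rlMin_le w (swapHi_le_of_swapLo_lt hm), hmax⟩

theorem psiMat_mul_eps {w : Equiv.Perm (Fin n)} {i : Fin (n - 1)}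
    (h : w (swapLo i) < w (swapHi i)) : psiMat w * eps i = psiMat (w * simpleT i) := by
  have hne := (swapLo_lt_swapHi i).ne
  funext a b
  apply propext
  rw [mul_eps_apply]
  by_cases hlo : b = swapLo i
  · subst hlo
    rw [simpleT_swapLo, psiMat_apply (w * simpleT i), rlMin_mul_simpleT_of_ne w hne,
      lrMax_mul_simpleT_swapLo w h]
    exact psiMat_swapLo_or_swapHi_iff w i a
  by_cases hhi : b = swapHi i
  · subst hhi
    rw [simpleT_swapHi, or_comm, psiMat_apply (w * simpleT i), rlMin_mul_simpleT_swapHi w h,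
      lrMax_mul_simpleT_of_ne w hne.symm]
    exact psiMat_swapLo_or_swapHi_iff w i a
  rw [simpleT_apply_of_ne hlo hhi, or_self, psiMat_apply, psiMat_apply,
    rlMin_mul_simpleT_of_ne w hhi, lrMax_mul_simpleT_of_ne w hlo]

theorem maxF_psiMat (w : Equiv.Perm (Fin n)) : maxF (psiMat w) = lrMax w := by
  classical
  funext j
  refine le_antisymm (Finset.max'_le _ _ _ ?_) (Finset.le_max' _ _ ?_)
  · simp only [Finset.mem_insert, Finset.mem_filter, Finset.mem_univ, true_and]
    rintro a (rfl | ⟨-, ha⟩)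
    exacts [self_le_lrMax w a, ha]
  · refine Finset.mem_insert_of_mem (Finset.mem_filter.2 ⟨Finset.mem_univ _, ?_, le_rfl⟩)
    exact (rlMin_le_self w j).trans (self_le_lrMax w j)

theorem minF_psiMat (w : Equiv.Perm (Fin n)) : minF (psiMat w) = rlMin w := by
  classical
  funext j
  refine le_antisymm (Finset.min'_le _ _ ?_) (Finset.le_min' _ _ _ ?_)
  · refine Finset.mem_insert_of_mem (Finset.mem_filter.2 ⟨Finset.mem_univ _, le_rfl, ?_⟩)
    exact (rlMin_le_self w j).trans (self_le_lrMax w j)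
  · simp only [Finset.mem_insert, Finset.mem_filter, Finset.mem_univ, true_and]
    rintro a (rfl | ⟨ha, -⟩)
    exacts [rlMin_le_self w a, ha]

end PsiMatrix

section Inversions

variable {n : ℕ}

def inversions (w : Equiv.Perm (Fin n)) : Finset (Fin n × Fin n) :=
  Finset.univ.filter fun p => p.1 < p.2 ∧ w p.2 < w p.1

@[simp]
theorem mem_inversions {w : Equiv.Perm (Fin n)} {p : Fin n × Fin n} :
    p ∈ inversions w ↔ p.1 < p.2 ∧ w p.2 < w p.1 := by
  simp [inversions]

@[simp]
theorem inversions_one : inversions (1 : Equiv.Perm (Fin n)) = ∅ :=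
  Finset.eq_empty_of_forall_notMem fun _ hp => (mem_inversions.1 hp).1.asymm (mem_inversions.1 hp).2

theorem inversions_mul_simpleT {w : Equiv.Perm (Fin n)} {i : Fin (n - 1)}
    (h : w (swapLo i) < w (swapHi i)) :
    inversions (w * simpleT i) =
      insert (swapLo i, swapHi i)
        ((inversions w).map ((simpleT i).prodCongr (simpleT i)).toEmbedding) := by
  ext ⟨a, b⟩
  simp only [Finset.mem_insert, Finset.mem_map_equiv, Equiv.prodCongr_symm, simpleT_symm,
    Equiv.prodCongr_apply, Prod.map, mem_inversions, Equiv.Perm.mul_apply]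
  by_cases hab : (a, b) = (swapLo i, swapHi i)
  · simp only [Prod.mk.injEq] at hab
    simp [hab, swapLo_lt_swapHi, h]
  by_cases hba : (a, b) = (swapHi i, swapLo i)
  · simp only [Prod.mk.injEq] at hba
    simp [hba, h.not_gt, (swapLo_lt_swapHi i).not_gt, (swapLo_lt_swapHi i).ne']
  rw [simpleT_lt_simpleT_iff hab hba]
  exact (or_iff_right hab).symm

theorem card_inversions_mul_simpleT {w : Equiv.Perm (Fin n)} {i : Fin (n - 1)}
    (h : w (swapLo i) < w (swapHi i)) :
    (inversions (w * simpleT i)).card = (inversions w).card + 1 := by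
  rw [inversions_mul_simpleT h, Finset.card_insert_of_notMem, Finset.card_map]
  simp [Finset.mem_map_equiv, (swapLo_lt_swapHi i).not_gt]

theorem card_inversions_mul_simpleT_add_one {w : Equiv.Perm (Fin n)} {i : Fin (n - 1)}
    (h : w (swapHi i) < w (swapLo i)) :
    (inversions (w * simpleT i)).card + 1 = (inversions w).card := by
  have := card_inversions_mul_simpleT (w := w * simpleT i) (i := i) (by simpa using h)
  rwa [mul_simpleT_mul_simpleT, eq_comm] at this

theorem card_inversions_mul_simpleT_le (w : Equiv.Perm (Fin n)) (i : Fin (n - 1)) :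
    (inversions (w * simpleT i)).card ≤ (inversions w).card + 1 := by
  rcases apply_swapLo_lt_or_gt w i with h | h
  · exact (card_inversions_mul_simpleT h).le
  · have := card_inversions_mul_simpleT_add_one h
    omega

theorem card_inversions_prod_le_length (l : List (Fin (n - 1))) :
    (inversions (l.map simpleT).prod).card ≤ l.length := by
  induction l using List.reverseRecOn with
  | nil => simp
  | append_singleton l i ih =>
    simpa using (card_inversions_mul_simpleT_le _ i).trans (Nat.succ_le_succ ih)

theorem exists_word_length_eq_card_inversions (w : Equiv.Perm (Fin n)) :
    ∃ l : List (Fin (n - 1)), (l.map simpleT).prod = w ∧ l.length = (inversions w).card := by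
  induction hw : (inversions w).card generalizing w with
  | zero =>
    refine ⟨[], ?_, rfl⟩
    refine (eq_one_of_forall_apply_swapLo_lt fun i => ?_).symm
    refine (apply_swapLo_lt_or_gt w i).resolve_right fun h => ?_
    have := card_inversions_mul_simpleT_add_one h
    omega
  | succ m ih =>
    obtain ⟨i, hi⟩ : ∃ i, w (swapHi i) < w (swapLo i) := by
      by_contra! hasc
      have hw1 := eq_one_of_forall_apply_swapLo_lt fun i =>
        (hasc i).lt_of_ne (w.injective.ne (swapLo_lt_swapHi i).ne)
      simp [hw1] at hw
    have hcard := card_inversions_mul_simpleT_add_one hi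
    obtain ⟨l, hprod, hlen⟩ := ih (w * simpleT i) (by omega)
    exact ⟨l ++ [i], by simp [hprod], by simp [hlen]⟩

theorem isRedWord_iff {w : Equiv.Perm (Fin n)} {l : List (Fin (n - 1))} :
    IsRedWord w l ↔ (l.map simpleT).prod = w ∧ l.length = (inversions w).card := by
  constructor
  · rintro ⟨hprod, hmin⟩
    obtain ⟨l₀, hprod₀, hlen₀⟩ := exists_word_length_eq_card_inversions w
    refine ⟨hprod, le_antisymm (hlen₀ ▸ hmin l₀ hprod₀) ?_⟩
    exact hprod ▸ card_inversions_prod_le_length l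
  · rintro ⟨hprod, hlen⟩
    exact ⟨hprod, fun l' hprod' => hlen ▸ hprod' ▸ card_inversions_prod_le_length l'⟩

end Inversions

theorem prod_eps_eq_psiMat {n : ℕ} (l : List (Fin (n - 1)))
    (hl : l.length = (inversions (l.map simpleT).prod).card) :
    (l.map eps).prod = psiMat (l.map simpleT).prod := by
  induction l using List.reverseRecOn with
  | nil => simp
  | append_singleton l i ih =>
    simp only [List.map_append, List.map_singleton, List.prod_append, List.prod_singleton,
      List.length_append, List.length_singleton] at hl ⊢
    have hle := card_inversions_prod_le_length l
    set u := (l.map simpleT).prod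
    have hasc : u (swapLo i) < u (swapHi i) := by
      refine (apply_swapLo_lt_or_gt u i).resolve_right fun hdesc => ?_
      have := card_inversions_mul_simpleT_add_one hdesc
      omega
    have hlen : l.length = (inversions u).card := by
      have := card_inversions_mul_simpleT hasc
      omega
    rw [ih hlen, psiMat_mul_eps hasc]

/-- For any reduced word `l` of `w`, the Boolean matrix `Ψ(z_w)`
(the product of the `ε_i` along `l`) has `(i,j)` entry `1` iff `β_w(j) ≤ i ≤ α_w(j)`;
in particular `max(Ψ(z_w)) = α_w` and `min(Ψ(z_w)) = β_w`. -/
theorem stmt_6 (n : ℕ) (w : Equiv.Perm (Fin n)) (l : List (Fin (n - 1)))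
    (hl : IsRedWord w l) :
    (l.map (eps (n := n))).prod = psiMat w ∧
    maxF ((l.map (eps (n := n))).prod) = lrMax w ∧
    minF ((l.map (eps (n := n))).prod) = rlMin w := by
  obtain ⟨hprod, hlen⟩ := isRedWord_iff.1 hl
  have hpsi : (l.map eps).prod = psiMat w := by
    rw [← hprod] at hlen ⊢
    exact prod_eps_eq_psiMat l hlen
  rw [hpsi]
  exact ⟨rfl, maxF_psiMat w, minF_psiMat w⟩
end
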